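/- Let λ ∈ ℂ with |λ| < ρ and let w = (w_j)_{j≥1} ∈ ℓ₁(ρ) be a block vector satisfying λ·(N_j^*·w₁ + (1/j)·w_{j+1}) = w_j for all j ≥ 1. Then the series Σ_{j=1}^∞ (λ^j/(j-1)!)·N_j^*·w₁ converges and equals w₁. -/

import Mathlib

open Matrix

/-- The `j`-th derivative of the matrix-valued function `M` at `0`, taken entrywise. -/
noncomputable def Mder (n : ℕ) (M : ℂ → Matrix (Fin n) (Fin n) ℂ) (j : ℕ) :
    Matrix (Fin n) (Fin n) ℂ :=
  Matrix.of fun i i' => iteratedDeriv j (fun z => M z i i') 0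

/-- `N_j = -(1/j) M(0)⁻¹ M^{(j)}(0)`. -/
noncomputable def Nmat (n : ℕ) (M : ℂ → Matrix (Fin n) (Fin n) ℂ) (j : ℕ) :
    Matrix (Fin n) (Fin n) ℂ :=
  (-(1/(j:ℂ))) • ((M 0)⁻¹ * Mder n M j)

/-- Matrix-vector product on Euclidean space. -/
noncomputable def mvE {n : ℕ} (A : Matrix (Fin n) (Fin n) ℂ)
    (x : EuclideanSpace ℂ (Fin n)) : EuclideanSpace ℂ (Fin n) :=
  WithLp.toLp 2 (A.mulVec x)

/-!
Multiplying the `j`-th block equation by `λ^j / j!` splits it into the `j`-th term of the series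
and the difference `g j - g (j + 1)` of `g j := (λ^j / j!) • w j`. Since `|λ| < ρ`, `‖g j‖` is at
most a constant times `ρ^(j+1) / (j+1)! * ‖w j‖`, so `g` is summable and the telescoping series
sums to `g 0 = w 0`.
-/

open Nat

theorem Summable.hasSum_sub_succ {G : Type*} [AddCommGroup G] [TopologicalSpace G]
    [IsTopologicalAddGroup G] {g : ℕ → G} (hg : Summable g) :
    HasSum (fun j => g j - g (j + 1)) (g 0) := by
  obtain ⟨S, hS⟩ := hg
  have hshift : HasSum (fun j => g (j + 1)) (S - g 0) := by
    simpa using (hasSum_nat_add_iff' 1).2 hS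
  simpa using hS.sub hshift

theorem exists_succ_mul_pow_le {r : ℝ} (hr₀ : 0 ≤ r) (hr₁ : r < 1) :
    ∃ C, ∀ j : ℕ, ((j : ℝ) + 1) * r ^ j ≤ C := by
  have hlim : Filter.Tendsto (fun j : ℕ => (j : ℝ) * r ^ j + r ^ j) Filter.atTop (nhds (0 + 0)) :=
    (tendsto_self_mul_const_pow_of_lt_one hr₀ hr₁).add
      (tendsto_pow_atTop_nhds_zero_of_lt_one hr₀ hr₁)
  obtain ⟨C, hC⟩ := hlim.bddAbove_range
  exact ⟨C, fun j => by simpa [add_mul] using hC ⟨j, rfl⟩⟩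

theorem summable_pow_div_factorial_smul {E : Type*} [NormedAddCommGroup E] [NormedSpace ℂ E]
    [CompleteSpace E] {ρ : ℝ} (hρ : 0 < ρ) {lam : ℂ} (hlam : ‖lam‖ < ρ) {w : ℕ → E}
    (hw : Summable fun j : ℕ => ρ ^ (j + 1) / (j + 1)! * ‖w j‖) :
    Summable fun j : ℕ => (lam ^ j / j !) • w j := by
  obtain ⟨C, hC⟩ := exists_succ_mul_pow_le (div_nonneg (norm_nonneg lam) hρ.le)
    ((div_lt_one hρ).2 hlam)
  refine Summable.of_norm_bounded (hw.mul_left (ρ⁻¹ * C)) fun j => ?_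
  have hterm : 0 ≤ ρ ^ (j + 1) / (j + 1)! * ‖w j‖ := by positivity
  calc ‖(lam ^ j / j !) • w j‖
      = ρ⁻¹ * (((j : ℝ) + 1) * (‖lam‖ / ρ) ^ j) * (ρ ^ (j + 1) / (j + 1)! * ‖w j‖) := by
        rw [norm_smul, norm_div, norm_pow, Complex.norm_natCast, factorial_succ, div_pow,
          pow_succ]
        push_cast
        field_simp
    _ ≤ ρ⁻¹ * C * (ρ ^ (j + 1) / (j + 1)! * ‖w j‖) := by gcongr; exact hC j

theorem pow_succ_div_factorial_smul_eq_sub {E : Type*} [AddCommGroup E] [Module ℂ E]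
    {lam : ℂ} {v u x : E} (j : ℕ) (h : lam • (v + (1 / ((j : ℂ) + 1)) • u) = x) :
    (lam ^ (j + 1) / j !) • v = (lam ^ j / j !) • x - (lam ^ (j + 1) / (j + 1)!) • u := by
  have hcoef : lam ^ (j + 1) / (j + 1)! = lam ^ j / j ! * (lam * (1 / ((j : ℂ) + 1))) := by
    rw [factorial_succ, pow_succ]
    push_cast
    field_simp
  subst h
  rw [hcoef]
  module

/-- Blocks are indexed from `0` (`w j` is the paper's `w_{j+1}`), and the series
index `j` below corresponds to the paper's `j+1`. -/
theorem first_block_series_general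
    (n : ℕ) (ρ : ℝ) (hρ : 0 < ρ)
    (M : ℂ → Matrix (Fin n) (Fin n) ℂ)
    (lam : ℂ) (hlamρ : ‖lam‖ < ρ)
    (w : ℕ → EuclideanSpace ℂ (Fin n))
    (hwl1 : Summable fun j : ℕ => ρ^(j+1) / (Nat.factorial (j+1)) * ‖w j‖)
    (heig : ∀ j : ℕ,
      lam • (mvE ((Nmat n M (j+1))ᴴ) (w 0) + (1/((j:ℂ)+1)) • w (j+1)) = w j) :
    HasSum (fun j : ℕ =>
      (lam^(j+1) / (Nat.factorial j : ℂ)) • mvE ((Nmat n M (j+1))ᴴ) (w 0)) (w 0) := by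
  have htel := (summable_pow_div_factorial_smul hρ hlamρ hwl1).hasSum_sub_succ
  simp only [pow_zero, factorial_zero, cast_one, div_one, one_smul] at htel
  exact htel.congr_fun fun j => pow_succ_div_factorial_smul_eq_sub j (heig j)

/-- if `|λ| < ρ`, `w ∈ ℓ₁(ρ)` and `λ 𝐀* w = w` blockwise, then
`Σ_{j≥1} (λ^j/(j-1)!) N_j^* w₁` converges to `w₁`.
Blocks are indexed from `0` (`w j` is the paper's `w_{j+1}`), and the series
index `j` below corresponds to the paper's `j+1`. -/
theorem first_block_series
    (n : ℕ) (hn : 1 ≤ n) (ρ : ℝ) (hρ : 0 < ρ)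
    (M : ℂ → Matrix (Fin n) (Fin n) ℂ)
    (hM : ∀ i i', AnalyticOnNhd ℂ (fun z => M z i i') (Metric.closedBall (0:ℂ) ρ))
    (hM0 : IsUnit (M 0))
    (lam : ℂ) (hlamρ : ‖lam‖ < ρ)
    (w : ℕ → EuclideanSpace ℂ (Fin n))
    (hwl1 : Summable fun j : ℕ => ρ^(j+1) / (Nat.factorial (j+1)) * ‖w j‖)
    (heig : ∀ j : ℕ,
      lam • (mvE ((Nmat n M (j+1))ᴴ) (w 0) + (1/((j:ℂ)+1)) • w (j+1)) = w j) :
    HasSum (fun j : ℕ =>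
      (lam^(j+1) / (Nat.factorial j : ℂ)) • mvE ((Nmat n M (j+1))ᴴ) (w 0)) (w 0) :=
  first_block_series_general n ρ hρ M lam hlamρ w hwl1 heig
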